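/- arXiv:1901.02258 — 2 statements merged into one kernel-verified Lean document; each statement's English description precedes it below -/
import Mathlib

section
/- Let c: [0,1] → ℍ³ be a hyperbolic geodesic of constant speed ℓ = |ċ|_h, and define f(t) = 1/z(c(t)), where z is the third coordinate in the upper half-space model. Then f satisfies the linear ODE f''(t) − ℓ² f(t) = 0, so f(t) = a cosh(ℓt) + b sinh(ℓt) for constants a = f(0) and b = f'(0)/ℓ. -/
/-!
Only the height component of the geodesic equation is needed. Since
`Γ²ᵢⱼ = (δᵢⱼ - 2 δᵢ₂ δⱼ₂) / z`, it reads `z'' = (2 z'² - |ċ|²) / z`, where `|ċ|²` is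
the Euclidean speed, and constant hyperbolic speed `|ċ|² = ℓ² z²` turns this into
`z'' = 2 z'² / z - ℓ² z`, which is exactly `(1/z)'' = ℓ² (1/z)`.
For the closed form, `g = f - (a cosh ℓt + b sinh ℓt)` solves `g'' = ℓ² g` with vanishing
initial data; then `g' - ℓ g` and `g` solve first-order equations `u' = ∓ℓ u` with `u 0 = 0`,
so both vanish.
-/

noncomputable section

def pd (l : Fin 3) (f : (Fin 3 → ℝ) → ℝ) (p : Fin 3 → ℝ) : ℝ :=
  fderiv ℝ f p (Pi.single l 1)

def hypMetric (p : Fin 3 → ℝ) (i j : Fin 3) : ℝ :=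
  if i = j then 1 / (p 2) ^ 2 else 0

def hypMetricInv (p : Fin 3 → ℝ) (i j : Fin 3) : ℝ :=
  if i = j then (p 2) ^ 2 else 0

def christoffel (k i j : Fin 3) (p : Fin 3 → ℝ) : ℝ :=
  (1 / 2) * ∑ l : Fin 3, hypMetricInv p k l *
    (pd i (fun q => hypMetric q l j) p + pd j (fun q => hypMetric q l i) p
      - pd l (fun q => hypMetric q i j) p)

/-- `c` is a (constant-speed) geodesic of the hyperbolic metric on upper half-space:
it stays in `{z > 0}`, is `C²`, and satisfies `c̈ᵏ + Γᵏ_{ij} ċⁱ ċʲ = 0`. -/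
def IsHypGeodesic (c : ℝ → Fin 3 → ℝ) : Prop :=
  (∀ t, 0 < c t 2) ∧ ContDiff ℝ 2 c ∧
    ∀ t (k : Fin 3), deriv (fun s => deriv (fun u => c u k) s) t
      + ∑ i, ∑ j, christoffel k i j (c t) * deriv (fun u => c u i) t
          * deriv (fun u => c u j) t = 0

lemma hasFDerivAt_one_div_sq_apply_two {p : Fin 3 → ℝ} (hp : p 2 ≠ 0) :
    HasFDerivAt (fun q : Fin 3 → ℝ => 1 / q 2 ^ 2)
      ((-2 / p 2 ^ 3) • ContinuousLinearMap.proj (R := ℝ) (φ := fun _ : Fin 3 => ℝ) 2) p := by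
  have hφ : HasDerivAt (fun x : ℝ => 1 / x ^ 2) (-2 / p 2 ^ 3) (p 2) := by
    simpa only [one_div] using
      ((hasDerivAt_pow 2 (p 2)).fun_inv (pow_ne_zero 2 hp)).congr_deriv (by field_simp; ring)
  exact hφ.comp_hasFDerivAt (f := fun q : Fin 3 → ℝ => q 2) p (hasFDerivAt_apply 2 p)

lemma pd_hypMetric (l i j : Fin 3) {p : Fin 3 → ℝ} (hp : p 2 ≠ 0) :
    pd l (fun q => hypMetric q i j) p =
      if i = j then (if l = 2 then -2 / p 2 ^ 3 else 0) else 0 := by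
  unfold pd hypMetric
  split_ifs with hij hl
  · rw [(hasFDerivAt_one_div_sq_apply_two hp).fderiv]; simp [hl]
  · rw [(hasFDerivAt_one_div_sq_apply_two hp).fderiv]; simp [Ne.symm hl]
  · simp

lemma christoffel_two_contract (p v : Fin 3 → ℝ) (hp : p 2 ≠ 0) :
    ∑ i, ∑ j, christoffel 2 i j p * v i * v j = ((∑ i, v i ^ 2) - 2 * v 2 ^ 2) / p 2 := by
  simp only [christoffel, hypMetricInv, pd_hypMetric _ _ _ hp, Fin.sum_univ_three]
  simp +decide only [if_true, if_false]
  field_simp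
  ring

lemma IsHypGeodesic.hasDerivAt_deriv_height {c : ℝ → Fin 3 → ℝ} (hc : IsHypGeodesic c)
    (t : ℝ) :
    HasDerivAt (deriv fun s => c s 2)
      (2 * deriv (fun s => c s 2) t ^ 2 / c t 2 - (∑ i, deriv (fun s => c s i) t ^ 2) / c t 2)
      t := by
  obtain ⟨hpos, hC2, hgeod⟩ := hc
  have hz : ContDiff ℝ 2 fun s => c s 2 := (contDiff_apply ℝ ℝ 2).comp hC2
  have hdiff : Differentiable ℝ (deriv fun s => c s 2) :=
    (hz.iterate_deriv' 1 1).differentiable one_ne_zero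
  refine (hdiff t).hasDerivAt.congr_deriv ?_
  have h := hgeod t 2
  rw [christoffel_two_contract _ _ (hpos t).ne'] at h
  linear_combination h

lemma hasDerivAt_neg_div_sq {z z' : ℝ → ℝ} {k t : ℝ} (hzt : z t ≠ 0)
    (hz : HasDerivAt z (z' t) t) (hz' : HasDerivAt z' (2 * z' t ^ 2 / z t - k * z t) t) :
    HasDerivAt (fun s => -z' s / z s ^ 2) (k * (1 / z t)) t := by
  refine (hz'.fun_neg.fun_div (hz.fun_pow 2) (pow_ne_zero 2 hzt)).congr_deriv ?_
  field_simp
  ring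

section LinearODE

variable {g g' : ℝ → ℝ}

lemma eq_zero_of_hasDerivAt_mul_self {a : ℝ} (hg : ∀ s, HasDerivAt g (a * g s) s)
    (h0 : g 0 = 0) (t : ℝ) : g t = 0 := by
  have hconst : ∀ s, HasDerivAt (fun s => g s * Real.exp (-(a * s))) 0 s := fun s => by
    have hexp := (((hasDerivAt_id' s).const_mul a).fun_neg).exp
    refine ((hg s).mul hexp).congr_deriv ?_
    ring
  have := is_const_of_deriv_eq_zero (fun s => (hconst s).differentiableAt)
    (fun s => (hconst s).deriv) t 0
  simpa [h0] using this

lemma eq_zero_of_hasDerivAt_of_hasDerivAt_sq_mul {ℓ : ℝ} (hg : ∀ s, HasDerivAt g (g' s) s)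
    (hg' : ∀ s, HasDerivAt g' (ℓ ^ 2 * g s) s) (h0 : g 0 = 0) (h0' : g' 0 = 0) (t : ℝ) :
    g t = 0 := by
  have hu : ∀ s, g' s - ℓ * g s = 0 := by
    refine eq_zero_of_hasDerivAt_mul_self (a := -ℓ) (fun s => ?_) (by simp [h0, h0'])
    refine ((hg' s).sub ((hg s).const_mul ℓ)).congr_deriv ?_
    ring
  refine eq_zero_of_hasDerivAt_mul_self (a := ℓ) (fun s => ?_) h0 t
  simpa [sub_eq_zero.mp (hu s)] using hg s

lemma eq_cosh_add_sinh_of_hasDerivAt {ℓ : ℝ} (hℓ : ℓ ≠ 0) (hg : ∀ s, HasDerivAt g (g' s) s)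
    (hg' : ∀ s, HasDerivAt g' (ℓ ^ 2 * g s) s) (t : ℝ) :
    g t = g 0 * Real.cosh (ℓ * t) + g' 0 / ℓ * Real.sinh (ℓ * t) := by
  set a := g 0
  set b := g' 0 / ℓ
  have hlin : ∀ s, HasDerivAt (fun s => ℓ * s) ℓ s := fun s => by
    simpa using (hasDerivAt_id s).const_mul ℓ
  have hcosh := fun s => (hlin s).cosh
  have hsinh := fun s => (hlin s).sinh
  have key := eq_zero_of_hasDerivAt_of_hasDerivAt_sq_mul (ℓ := ℓ)
    (g := fun s => g s - (a * Real.cosh (ℓ * s) + b * Real.sinh (ℓ * s)))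
    (g' := fun s => g' s - (a * (Real.sinh (ℓ * s) * ℓ) + b * (Real.cosh (ℓ * s) * ℓ)))
    (fun s => (hg s).sub (((hcosh s).const_mul a).add ((hsinh s).const_mul b)))
    (fun s => by
      refine ((hg' s).sub ((((hsinh s).mul_const ℓ).const_mul a).add
        (((hcosh s).mul_const ℓ).const_mul b))).congr_deriv ?_
      ring)
    (by simp [a]) (by simp [b, hℓ]) t
  exact sub_eq_zero.mp key

end LinearODE

/-- For a hyperbolic geodesic `c` of constant speed `ℓ = |ċ|_h`, the function
`f(t) = 1/z(c(t))` satisfies `f'' − ℓ² f = 0`, whence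
`f(t) = f(0) cosh(ℓt) + (f'(0)/ℓ) sinh(ℓt)`. -/
theorem inverse_height_ode (c : ℝ → Fin 3 → ℝ) (ℓ : ℝ)
    (hgeo : IsHypGeodesic c)
    (hspeed : ∀ t, (∑ i, (deriv (fun u => c u i) t) ^ 2) / (c t 2) ^ 2 = ℓ ^ 2) :
    (∀ t, deriv (deriv fun s => 1 / c s 2) t - ℓ ^ 2 * (1 / c t 2) = 0)
    ∧ (ℓ ≠ 0 → ∀ t, 1 / c t 2 =
        (1 / c 0 2) * Real.cosh (ℓ * t)
          + (deriv (fun s => 1 / c s 2) 0 / ℓ) * Real.sinh (ℓ * t)) := by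
  have hzne : ∀ t, c t 2 ≠ 0 := fun t => (hgeo.1 t).ne'
  have hheight := hgeo.hasDerivAt_deriv_height
  set z' := deriv fun s => c s 2
  have hz : ∀ t, HasDerivAt (fun s => c s 2) (z' t) t := fun t =>
    (((contDiff_apply ℝ ℝ 2).comp hgeo.2.1).differentiable two_ne_zero t).hasDerivAt
  have hz' : ∀ t, HasDerivAt z' (2 * z' t ^ 2 / c t 2 - ℓ ^ 2 * c t 2) t := fun t => by
    refine (hheight t).congr_deriv ?_
    rw [← hspeed t]
    field_simp [hzne t]
  have hf : ∀ t, HasDerivAt (fun s => 1 / c s 2) (-z' t / c t 2 ^ 2) t := fun t => by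
    simpa only [one_div] using (hz t).fun_inv (hzne t)
  have hf' : ∀ t, HasDerivAt (fun s => -z' s / c s 2 ^ 2) (ℓ ^ 2 * (1 / c t 2)) t := fun t =>
    hasDerivAt_neg_div_sq (hzne t) (hz t) (hz' t)
  have hderiv : deriv (fun s => 1 / c s 2) = fun s => -z' s / c s 2 ^ 2 :=
    funext fun t => (hf t).deriv
  refine ⟨fun t => by rw [hderiv, (hf' t).deriv, sub_self], fun hℓ t => ?_⟩
  rw [hderiv]
  exact eq_cosh_add_sinh_of_hasDerivAt hℓ hf hf' t
end
end

section
/- Let (N,g) be Riemannian, T ⊂ N a compact submanifold, and γ_q the constant Hamiltonian chord at (q,0) ∈ ν*T for q ∈ T. Then the kernel of the Hessian of the action functional A_{H_g} at γ_q, acting on vector fields ξ = (ξ^∥, ξ^⊥) along γ_q with boundary conditions ξ^∥(i) ∈ T_qT and ξ^⊥(i) ∈ ν*_qT (i = 0,1), and defined by the linearized system Dξ^∥♭/dt = ξ^⊥, Dξ^⊥/dt = 0, consists exactly of the constant fields ξ(t) ≡ (v, 0) with v ∈ T_qT; in particular it is isomorphic to T_qT. -/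
theorem eq_add_smul_of_hasDerivAt_const {E : Type*} [NormedAddCommGroup E] [NormedSpace ℝ E]
    {f : ℝ → E} {a : E} (hf : ∀ t, HasDerivAt f a t) (t : ℝ) : f t = f 0 + t • a := by
  have hderiv (s : ℝ) : HasDerivAt (fun u : ℝ => f u - u • a) 0 s := by
    have h := (hf s).sub ((hasDerivAt_id' s).smul_const a)
    rwa [one_smul, sub_self] at h
  have hconst := is_const_of_deriv_eq_zero (fun s => (hderiv s).differentiableAt)
    (fun s => (hderiv s).deriv) t 0
  simp only [zero_smul, sub_zero] at hconst
  rw [← hconst, sub_add_cancel]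

/-- `T_{(q,0)}(T*N) ≅ T_qN ⊕ T*_qN` is identified with `E ⊕ E` via the metric, with
`W = T_qT` and `Wᗮ = ν*_qT`; `(ξpar, ξperp)` is a vector field along the constant chord. -/
theorem hessian_kernel_of_constant_chord
    {E : Type*} [NormedAddCommGroup E] [InnerProductSpace ℝ E]
    (W : Submodule ℝ E) (ξpar ξperp : ℝ → E) :
    ((∀ t, HasDerivAt ξpar (ξperp t) t) ∧ (∀ t, HasDerivAt ξperp (0 : E) t) ∧
        ξpar 0 ∈ W ∧ ξpar 1 ∈ W ∧ ξperp 0 ∈ Wᗮ ∧ ξperp 1 ∈ Wᗮ)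
      ↔ ∃ v ∈ W, (∀ t, ξpar t = v) ∧ ∀ t, ξperp t = 0 := by
  constructor
  · rintro ⟨hpar, hperp, hpar0, hpar1, hperp0, -⟩
    have hperp_const (t : ℝ) : ξperp t = ξperp 0 := by
      simpa using eq_add_smul_of_hasDerivAt_const hperp t
    have hpar_affine := eq_add_smul_of_hasDerivAt_const fun t => hperp_const t ▸ hpar t
    -- The slope `ξperp 0` is the difference of the two endpoints, so it lies in `W ⊓ Wᗮ = ⊥`.
    have hslope_mem : ξperp 0 ∈ W := by
      simpa [hpar_affine 1] using W.sub_mem hpar1 hpar0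
    have hslope : ξperp 0 = 0 :=
      Submodule.disjoint_def.1 W.orthogonal_disjoint _ hslope_mem hperp0
    exact ⟨ξpar 0, hpar0, fun t => by simp [hpar_affine t, hslope],
      fun t => hperp_const t ▸ hslope⟩
  · rintro ⟨v, hv, hpar, hperp⟩
    obtain rfl : ξpar = fun _ => v := funext hpar
    obtain rfl : ξperp = fun _ => 0 := funext hperp
    exact ⟨fun t => hasDerivAt_const t v, fun t => hasDerivAt_const t 0, hv, hv,
      Submodule.zero_mem _, Submodule.zero_mem _⟩
end
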